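/- Let φ ∈ L²_loc(0,∞). The following are equivalent: (i) the operator Q_φ extends to a bounded operator on L²(0,∞); (ii) the operator Q_φ⁺ extends to a bounded operator on L²(0,∞); (iii) sup_{x>0} x·∫_x^∞ |φ(y)|² dy < ∞. -/

import Mathlib

open MeasureTheory Set Filter
open scoped ENNReal NNReal Topology

noncomputable section

def TestFun (f : ℝ → ℂ) : Prop :=
  (∃ C : ℝ, ∀ x, ‖f x‖ ≤ C) ∧ ∃ a b : ℝ, 0 < a ∧ ∀ x, x ∉ Set.Icc a b → f x = 0

def IsQ (φ : ℝ → ℂ) (s : Set ℝ)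
    (T : Lp ℂ 2 (volume.restrict s) →L[ℂ] Lp ℂ 2 (volume.restrict s)) : Prop :=
  ∀ (f : ℝ → ℂ) (hf : MemLp f 2 (volume.restrict s)), TestFun f →
    ⇑(T (MemLp.toLp f hf)) =ᵐ[volume.restrict s] fun x => ∫ y in s, φ (max x y) * f y

def IsQplus (φ : ℝ → ℂ)
    (T : Lp ℂ 2 (volume.restrict (Set.Ioi (0:ℝ))) →L[ℂ]
         Lp ℂ 2 (volume.restrict (Set.Ioi (0:ℝ)))) : Prop :=
  ∀ (f : ℝ → ℂ) (hf : MemLp f 2 (volume.restrict (Set.Ioi (0:ℝ)))), TestFun f →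
    ⇑(T (MemLp.toLp f hf)) =ᵐ[volume.restrict (Set.Ioi (0:ℝ))]
      fun x => φ x * ∫ y in Set.Ioc (0:ℝ) x, f y

def IsQminus (φ : ℝ → ℂ)
    (T : Lp ℂ 2 (volume.restrict (Set.Ioi (0:ℝ))) →L[ℂ]
         Lp ℂ 2 (volume.restrict (Set.Ioi (0:ℝ)))) : Prop :=
  ∀ (f : ℝ → ℂ) (hf : MemLp f 2 (volume.restrict (Set.Ioi (0:ℝ)))), TestFun f →
    ⇑(T (MemLp.toLp f hf)) =ᵐ[volume.restrict (Set.Ioi (0:ℝ))]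
      fun x => ∫ y in Set.Ioi x, φ y * f y

def sNum {E F : Type*} [NormedAddCommGroup E] [NormedSpace ℂ E]
    [NormedAddCommGroup F] [NormedSpace ℂ F] (T : E →L[ℂ] F) (n : ℕ) : ℝ :=
  sInf ((fun R : E →L[ℂ] F => ‖T - R‖) ''
    {R : E →L[ℂ] F | LinearMap.rank (R : E →ₗ[ℂ] F) ≤ (n : Cardinal)})

def schattenSum {E F : Type*} [NormedAddCommGroup E] [NormedSpace ℂ E]
    [NormedAddCommGroup F] [NormedSpace ℂ F] (p : ℝ) (T : E →L[ℂ] F) : ℝ≥0∞ :=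
  ∑' n : ℕ, ENNReal.ofReal (sNum T n) ^ p

def MemSchatten {E F : Type*} [NormedAddCommGroup E] [NormedSpace ℂ E]
    [NormedAddCommGroup F] [NormedSpace ℂ F] (p : ℝ) (T : E →L[ℂ] F) : Prop :=
  schattenSum p T < ⊤

/-!
Necessity: tested against the indicator of `(x/2, x]`, both `Q_φ` and `Q_φ⁺` return `(x/2) φ` on
`(x, ∞)`, so `(x/2)² ∫_x^∞ |φ|² ≤ ‖T‖² · x/2`.

Sufficiency: `Q_φ = Q_φ⁺ + Q_φ⁻` with `(Q_φ⁻ f)(x) = ∫_x^∞ φ f`. If `x ∫_x^∞ |φ|² ≤ C` for all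
`x > 0`, a dyadic decomposition gives `∫_t^∞ |φ(x)|² √x dx ≤ 4C/√t`. Cauchy–Schwarz with the weight
`√y`, followed by an exchange of the order of integration, then bounds `‖Q_φ^± f‖²` by `8C ‖f‖²`.
-/

namespace QPhi

local notation "μ₊" => (volume.restrict (Ioi (0 : ℝ)) : Measure ℝ)

theorem lintegral_mul_sq_le_weighted {α : Type*} [MeasurableSpace α] {μ : Measure α}
    {u v w : α → ℝ≥0∞} (hu : AEMeasurable u μ) (hv : AEMeasurable v μ)
    (hw : AEMeasurable w μ) (hw₀ : ∀ᵐ a ∂μ, w a ≠ 0) (hw_top : ∀ᵐ a ∂μ, w a ≠ ⊤) :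
    (∫⁻ a, u a * v a ∂μ) ^ 2 ≤ (∫⁻ a, u a ^ 2 * w a ∂μ) * ∫⁻ a, v a ^ 2 * (w a)⁻¹ ∂μ := by
  set s : α → ℝ≥0∞ := fun a => w a ^ (2⁻¹ : ℝ)
  have hs : AEMeasurable s μ := hw.pow_const _
  have hs_sq : ∀ a, s a ^ 2 = w a := fun a => by
    rw [← ENNReal.rpow_natCast, ← ENNReal.rpow_mul]; norm_num
  have huv : (fun a => u a * v a) =ᵐ[μ] fun a => (u a * s a) * (v a * (s a)⁻¹) := by
    filter_upwards [hw₀, hw_top] with a h₀ h_top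
    have : s a * (s a)⁻¹ = 1 := ENNReal.mul_inv_cancel
      (by simp [s, h₀]) (by simp [s, h_top])
    calc u a * v a = u a * v a * (s a * (s a)⁻¹) := by rw [this, mul_one]
      _ = _ := by ring
  have holder := ENNReal.lintegral_mul_le_Lp_mul_Lq μ Real.HolderConjugate.two_two
    (hu.mul hs) (hv.mul hs.inv)
  rw [lintegral_congr_ae huv]
  calc _ ≤ ((∫⁻ a, (u a * s a) ^ (2 : ℝ) ∂μ) ^ (1 / 2 : ℝ)
        * (∫⁻ a, (v a * (s a)⁻¹) ^ (2 : ℝ) ∂μ) ^ (1 / 2 : ℝ)) ^ 2 := by gcongr; exact holder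
    _ = (∫⁻ a, (u a * s a) ^ 2 ∂μ) * ∫⁻ a, (v a * (s a)⁻¹) ^ 2 ∂μ := by
      simp only [ENNReal.rpow_two, mul_pow, ← ENNReal.rpow_natCast, ← ENNReal.rpow_mul]
      norm_num
    _ = _ := by simp only [mul_pow, ← ENNReal.inv_pow, hs_sq]

theorem eLpNorm_two_sq {α E : Type*} [MeasurableSpace α] [NormedAddCommGroup E] (μ : Measure α)
    (f : α → E) :
    eLpNorm f 2 μ ^ 2 = ∫⁻ a, ‖f a‖ₑ ^ 2 ∂μ := by
  rw [eLpNorm_eq_lintegral_rpow_enorm_toReal two_ne_zero ENNReal.ofNat_ne_top,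
    ← ENNReal.rpow_natCast, ← ENNReal.rpow_mul]
  norm_num

theorem eLpNorm_two_le_of_lintegral_sq_le {α E F : Type*} [MeasurableSpace α]
    [NormedAddCommGroup E] [NormedAddCommGroup F] {μ : Measure α}
    {u : α → E} {v : α → F} {K : ℝ≥0∞} (h : ∫⁻ a, ‖u a‖ₑ ^ 2 ∂μ ≤ K * ∫⁻ a, ‖v a‖ₑ ^ 2 ∂μ) :
    eLpNorm u 2 μ ≤ K ^ (2⁻¹ : ℝ) * eLpNorm v 2 μ := by
  have hsqrt : ∀ a : ℝ≥0∞, (a ^ 2) ^ (2⁻¹ : ℝ) = a := fun a => by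
    rw [← ENNReal.rpow_natCast, ← ENNReal.rpow_mul]; norm_num
  rw [← eLpNorm_two_sq, ← eLpNorm_two_sq] at h
  calc eLpNorm u 2 μ = (eLpNorm u 2 μ ^ 2) ^ (2⁻¹ : ℝ) := (hsqrt _).symm
    _ ≤ (K * eLpNorm v 2 μ ^ 2) ^ (2⁻¹ : ℝ) := by gcongr
    _ = K ^ (2⁻¹ : ℝ) * eLpNorm v 2 μ := by rw [ENNReal.mul_rpow_of_nonneg _ _ (by norm_num), hsqrt]

theorem exists_continuousLinearMap_of_eLpNorm_le {α 𝕜 E F : Type*} [MeasurableSpace α]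
    {μ : Measure α} {p : ℝ≥0∞} [Fact (1 ≤ p)] [NontriviallyNormedField 𝕜]
    [NormedAddCommGroup E] [NormedSpace 𝕜 E] [NormedAddCommGroup F] [NormedSpace 𝕜 F]
    (K : (α → E) → α → F) (C : ℝ≥0∞) (hC : C ≠ ⊤)
    (h_meas : ∀ f, MemLp f p μ → AEStronglyMeasurable (K f) μ)
    (h_le : ∀ f, MemLp f p μ → eLpNorm (K f) p μ ≤ C * eLpNorm f p μ)
    (h_congr : ∀ f g, MemLp f p μ → f =ᵐ[μ] g → K f =ᵐ[μ] K g)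
    (h_add : ∀ f g, MemLp f p μ → MemLp g p μ → K (f + g) =ᵐ[μ] K f + K g)
    (h_smul : ∀ (c : 𝕜) f, MemLp f p μ → K (c • f) =ᵐ[μ] c • K f) :
    ∃ T : Lp E p μ →L[𝕜] Lp F p μ, ∀ f (hf : MemLp f p μ), T (hf.toLp f) =ᵐ[μ] K f := by
  have hK : ∀ f : Lp E p μ, MemLp (K f) p μ := fun f =>
    ⟨h_meas f (Lp.memLp f), (h_le f (Lp.memLp f)).trans_lt
      (ENNReal.mul_lt_top hC.lt_top (Lp.eLpNorm_lt_top f))⟩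
  let L : Lp E p μ →ₗ[𝕜] Lp F p μ :=
    { toFun := fun f => (hK f).toLp
      map_add' := fun f g => by
        rw [← MemLp.toLp_add, MemLp.toLp_eq_toLp_iff]
        exact (h_congr _ _ (Lp.memLp _) (Lp.coeFn_add f g)).trans
          (h_add _ _ (Lp.memLp f) (Lp.memLp g))
      map_smul' := fun c f => by
        rw [RingHom.id_apply, ← MemLp.toLp_const_smul, MemLp.toLp_eq_toLp_iff]
        exact (h_congr _ _ (Lp.memLp _) (Lp.coeFn_smul c f)).trans
          (h_smul c _ (Lp.memLp f)) }
  have hL : ∀ f, ‖L f‖ ≤ C.toReal * ‖f‖ := fun f => by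
    rw [Lp.norm_def, Lp.norm_def, ← ENNReal.toReal_mul]
    refine ENNReal.toReal_mono (ENNReal.mul_ne_top hC (Lp.eLpNorm_ne_top f)) ?_
    exact (eLpNorm_congr_ae (hK f).coeFn_toLp).trans_le (h_le f (Lp.memLp f))
  refine ⟨L.mkContinuous _ hL, fun f hf => ?_⟩
  exact (hK _).coeFn_toLp.trans (h_congr _ _ (Lp.memLp _) hf.coeFn_toLp)

def TailBounded (g : ℝ → ℝ≥0∞) (C : ℝ≥0∞) : Prop :=
  ∀ x : ℝ, 0 < x → ENNReal.ofReal x * ∫⁻ y in Ioi x, g y ≤ C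

theorem lintegral_Ioc_inv_sqrt {x : ℝ} (hx : 0 < x) :
    ∫⁻ y in Ioc 0 x, (ENNReal.ofReal √y)⁻¹ = 2 * ENNReal.ofReal √x := by
  have h_eq : EqOn (fun y : ℝ => y ^ (-1 / 2 : ℝ)) (fun y => (√y)⁻¹) (Ioc 0 x) := fun y hy => by
    dsimp only
    rw [Real.sqrt_eq_rpow, ← Real.rpow_neg hy.1.le]; norm_num
  have h_int : IntegrableOn (fun y => (√y)⁻¹) (Ioc 0 x) :=
    (intervalIntegral.intervalIntegrable_rpow' (by norm_num)).1.congr_fun h_eq measurableSet_Ioc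
  calc ∫⁻ y in Ioc 0 x, (ENNReal.ofReal √y)⁻¹ = ∫⁻ y in Ioc 0 x, ENNReal.ofReal (√y)⁻¹ :=
        setLIntegral_congr_fun measurableSet_Ioc fun y hy =>
          (ENNReal.ofReal_inv_of_pos (Real.sqrt_pos.2 hy.1)).symm
    _ = ENNReal.ofReal (∫ y in 0..x, y ^ (-1 / 2 : ℝ)) := by
        rw [← ofReal_integral_eq_lintegral_ofReal h_int (ae_of_all _ fun y => by positivity),
          intervalIntegral.integral_of_le hx.le, setIntegral_congr_fun measurableSet_Ioc h_eq]
    _ = 2 * ENNReal.ofReal √x := by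
        rw [integral_rpow (Or.inl (by norm_num)), Real.sqrt_eq_rpow, ← ENNReal.ofReal_ofNat,
          ← ENNReal.ofReal_mul zero_le_two]
        congr 1
        norm_num
        ring

theorem lintegral_Ico_mul_sqrt_le {g : ℝ → ℝ≥0∞} {C : ℝ≥0∞}
    (hC : TailBounded g C) {a : ℝ} (ha : 0 < a) :
    ∫⁻ x in Ico a (4 * a), g x * ENNReal.ofReal √x ≤ C * ENNReal.ofReal (2 / √a) := by
  have h_tail : ∫⁻ x in Ico a (4 * a), g x ≤ C / ENNReal.ofReal a := by
    rw [ENNReal.le_div_iff_mul_le (Or.inl (ENNReal.ofReal_pos.2 ha).ne')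
      (Or.inl ENNReal.ofReal_ne_top), mul_comm]
    refine le_trans ?_ (hC a ha)
    rw [restrict_Ioi_eq_restrict_Ici]
    gcongr
    exact Ico_subset_Ici_self
  have h_sqrt : √(4 * a) / a = 2 / √a := by
    have : 0 < √a := Real.sqrt_pos.2 ha
    rw [Real.sqrt_mul (by norm_num), show √(4 : ℝ) = 2 by norm_num]
    nth_rw 2 [← Real.sq_sqrt ha.le]
    field_simp
  calc ∫⁻ x in Ico a (4 * a), g x * ENNReal.ofReal √x
      ≤ ∫⁻ x in Ico a (4 * a), g x * ENNReal.ofReal √(4 * a) :=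
        setLIntegral_mono' measurableSet_Ico fun x hx => by gcongr; exact hx.2.le
    _ = (∫⁻ x in Ico a (4 * a), g x) * ENNReal.ofReal √(4 * a) :=
        lintegral_mul_const' _ _ ENNReal.ofReal_ne_top
    _ ≤ C / ENNReal.ofReal a * ENNReal.ofReal √(4 * a) := by gcongr
    _ = C * ENNReal.ofReal (2 / √a) := by
        rw [← h_sqrt, ENNReal.ofReal_div_of_pos ha]
        simp only [div_eq_mul_inv]
        ring

theorem lintegral_Ioi_mul_sqrt_le {g : ℝ → ℝ≥0∞} {C : ℝ≥0∞}
    (hC : TailBounded g C) {t : ℝ} (ht : 0 < t) :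
    ∫⁻ x in Ioi t, g x * ENNReal.ofReal √x ≤ 4 * C * (ENNReal.ofReal √t)⁻¹ := by
  have h_cover : Ioi t ⊆ ⋃ k : ℕ, Ico (4 ^ k * t) (4 * (4 ^ k * t)) := fun x hx => by
    obtain ⟨k, hk₁, hk₂⟩ := exists_nat_pow_near ((one_le_div ht).2 (le_of_lt hx))
      (by norm_num : (1 : ℝ) < 4)
    refine mem_iUnion.2 ⟨k, (le_div_iff₀ ht).1 hk₁, ?_⟩
    rw [← mul_assoc, ← pow_succ']
    exact (div_lt_iff₀ ht).1 hk₂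
  have h_sqrt : ∀ k : ℕ, 2 / √(4 ^ k * t) = 2 / √t * (1 / 2) ^ k := fun k => by
    have : (4 : ℝ) ^ k = (2 ^ k) ^ 2 := by rw [← pow_mul, mul_comm, pow_mul]; norm_num
    rw [Real.sqrt_mul (by positivity), this, Real.sqrt_sq (by positivity), one_div_pow]
    field_simp
  calc ∫⁻ x in Ioi t, g x * ENNReal.ofReal √x
      ≤ ∑' k : ℕ, ∫⁻ x in Ico (4 ^ k * t) (4 * (4 ^ k * t)), g x * ENNReal.ofReal √x :=
        (lintegral_mono_set h_cover).trans (lintegral_iUnion_le _ _)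
    _ ≤ ∑' k : ℕ, C * ENNReal.ofReal (2 / √t * (1 / 2) ^ k) := ENNReal.tsum_le_tsum fun k =>
        (lintegral_Ico_mul_sqrt_le hC (by positivity)).trans_eq (by rw [h_sqrt])
    _ = 4 * C * (ENNReal.ofReal √t)⁻¹ := by
        rw [ENNReal.tsum_mul_left, ← ENNReal.ofReal_tsum_of_nonneg (fun k => by positivity)
          (summable_geometric_two.mul_left _), tsum_mul_left, tsum_geometric_two,
          div_mul_eq_mul_div, ENNReal.ofReal_div_of_pos (Real.sqrt_pos.2 ht), div_eq_mul_inv]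
        norm_num
        ring

theorem lintegral_Ioi_mul_lintegral_Ioc_comm {A B : ℝ → ℝ≥0∞}
    (hA : AEMeasurable A μ₊) (hB : AEMeasurable B μ₊) :
    ∫⁻ x in Ioi 0, A x * ∫⁻ y in Ioc 0 x, B y = ∫⁻ y in Ioi 0, B y * ∫⁻ x in Ici y, A x := by
  let F : ℝ → ℝ → ℝ≥0∞ := fun x y => (Iic x).indicator (fun y => A x * B y) y
  have hF : AEMeasurable (Function.uncurry F) (μ₊.prod μ₊) :=
    (hA.comp_fst.mul hB.comp_snd).indicator (measurableSet_le measurable_snd measurable_fst)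
  have h_inner_y : ∀ x, A x * ∫⁻ y in Ioc 0 x, B y = ∫⁻ y, F x y ∂μ₊ := fun x => by
    rw [lintegral_indicator measurableSet_Iic, lintegral_const_mul'' _ hB.restrict,
      Measure.restrict_restrict measurableSet_Iic, Iic_inter_Ioi]
  have h_inner_x : ∀ y ∈ Ioi (0 : ℝ), B y * ∫⁻ x in Ici y, A x = ∫⁻ x, F x y ∂μ₊ := fun y hy => by
    change _ = ∫⁻ x, (Ici y).indicator (fun x => A x * B y) x ∂μ₊
    rw [lintegral_indicator measurableSet_Ici, lintegral_mul_const'' _ hA.restrict, mul_comm,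
      Measure.restrict_restrict measurableSet_Ici,
      inter_eq_left.2 (Ici_subset_Ioi.2 hy)]
  calc ∫⁻ x in Ioi 0, A x * ∫⁻ y in Ioc 0 x, B y = ∫⁻ x, ∫⁻ y, F x y ∂μ₊ ∂μ₊ :=
        lintegral_congr h_inner_y
    _ = ∫⁻ y, ∫⁻ x, F x y ∂μ₊ ∂μ₊ := lintegral_lintegral_swap hF
    _ = ∫⁻ y in Ioi 0, B y * ∫⁻ x in Ici y, A x :=
        (setLIntegral_congr_fun measurableSet_Ioi h_inner_x).symm

theorem lintegral_mul_sq_lintegral_Ioc_le {a g : ℝ → ℝ≥0∞} {C : ℝ≥0∞}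
    (ha : AEMeasurable a μ₊) (hg : AEMeasurable g μ₊)
    (hC : TailBounded a C) :
    ∫⁻ x in Ioi 0, a x * (∫⁻ y in Ioc 0 x, g y) ^ 2 ≤ 8 * C * ∫⁻ y in Ioi 0, g y ^ 2 := by
  have hw : Measurable fun y : ℝ => ENNReal.ofReal √y := by fun_prop
  have h_cs : ∀ x ∈ Ioi (0 : ℝ), a x * (∫⁻ y in Ioc 0 x, g y) ^ 2
      ≤ 2 * (a x * ENNReal.ofReal √x) * ∫⁻ y in Ioc 0 x, g y ^ 2 * ENNReal.ofReal √y := by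
    intro x hx
    have hg' : AEMeasurable g (volume.restrict (Ioc 0 x)) := hg.mono_set Ioc_subset_Ioi_self
    have h := lintegral_mul_sq_le_weighted hg' (aemeasurable_const (b := 1)) hw.aemeasurable
      (ae_restrict_of_forall_mem measurableSet_Ioc fun y hy => by simpa using hy.1)
      (ae_of_all _ fun _ => ENNReal.ofReal_ne_top)
    simp only [mul_one, one_pow, one_mul, lintegral_Ioc_inv_sqrt hx] at h
    calc a x * (∫⁻ y in Ioc 0 x, g y) ^ 2
        ≤ a x * ((∫⁻ y in Ioc 0 x, g y ^ 2 * ENNReal.ofReal √y) * (2 * ENNReal.ofReal √x)) := by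
          gcongr
      _ = _ := by ring
  calc ∫⁻ x in Ioi 0, a x * (∫⁻ y in Ioc 0 x, g y) ^ 2
      ≤ ∫⁻ x in Ioi 0, 2 * (a x * ENNReal.ofReal √x)
          * ∫⁻ y in Ioc 0 x, g y ^ 2 * ENNReal.ofReal √y :=
        setLIntegral_mono' measurableSet_Ioi h_cs
    _ = ∫⁻ y in Ioi 0, g y ^ 2 * ENNReal.ofReal √y
          * ∫⁻ x in Ici y, 2 * (a x * ENNReal.ofReal √x) :=
        lintegral_Ioi_mul_lintegral_Ioc_comm (by fun_prop) (by fun_prop)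
    _ ≤ ∫⁻ y in Ioi 0, g y ^ 2 * ENNReal.ofReal √y * (2 * (4 * C * (ENNReal.ofReal √y)⁻¹)) := by
        refine setLIntegral_mono' measurableSet_Ioi fun y hy => ?_
        rw [lintegral_const_mul' _ _ ENNReal.ofNat_ne_top, ← restrict_Ioi_eq_restrict_Ici]
        gcongr
        exact lintegral_Ioi_mul_sqrt_le hC hy
    _ = ∫⁻ y in Ioi 0, 8 * C * g y ^ 2 := by
        refine setLIntegral_congr_fun measurableSet_Ioi fun y hy => ?_
        calc g y ^ 2 * ENNReal.ofReal √y * (2 * (4 * C * (ENNReal.ofReal √y)⁻¹))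
            = 8 * C * g y ^ 2 * ((ENNReal.ofReal √y)⁻¹ * ENNReal.ofReal √y) := by ring
          _ = 8 * C * g y ^ 2 := by
            rw [ENNReal.inv_mul_cancel (by simpa using hy) ENNReal.ofReal_ne_top, mul_one]
    _ = 8 * C * ∫⁻ y in Ioi 0, g y ^ 2 := lintegral_const_mul'' _ (hg.pow_const 2)

theorem lintegral_sq_lintegral_Ioi_mul_le {b g : ℝ → ℝ≥0∞} {C : ℝ≥0∞}
    (hb : AEMeasurable b μ₊) (hg : AEMeasurable g μ₊)
    (hC : TailBounded (fun y => b y ^ 2) C) :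
    ∫⁻ x in Ioi 0, (∫⁻ y in Ioi x, b y * g y) ^ 2 ≤ 8 * C * ∫⁻ y in Ioi 0, g y ^ 2 := by
  have hw : Measurable fun y : ℝ => ENNReal.ofReal √y := by fun_prop
  have h_cs : ∀ x ∈ Ioi (0 : ℝ), (∫⁻ y in Ioi x, b y * g y) ^ 2
      ≤ 4 * C * (ENNReal.ofReal √x)⁻¹ * ∫⁻ y in Ici x, g y ^ 2 * (ENNReal.ofReal √y)⁻¹ := by
    intro x hx
    have hsub : Ioi x ⊆ Ioi 0 := Ioi_subset_Ioi (le_of_lt hx)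
    rw [← restrict_Ioi_eq_restrict_Ici]
    refine (lintegral_mul_sq_le_weighted (hb.mono_set hsub) (hg.mono_set hsub) hw.aemeasurable
      (ae_restrict_of_forall_mem measurableSet_Ioi fun y hy => by simpa using hx.trans hy)
      (ae_of_all _ fun _ => ENNReal.ofReal_ne_top)).trans ?_
    gcongr
    exact lintegral_Ioi_mul_sqrt_le hC hx
  calc ∫⁻ x in Ioi 0, (∫⁻ y in Ioi x, b y * g y) ^ 2
      ≤ ∫⁻ x in Ioi 0, 4 * C * (ENNReal.ofReal √x)⁻¹
          * ∫⁻ y in Ici x, g y ^ 2 * (ENNReal.ofReal √y)⁻¹ :=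
        setLIntegral_mono' measurableSet_Ioi h_cs
    _ = ∫⁻ y in Ioi 0, g y ^ 2 * (ENNReal.ofReal √y)⁻¹
          * ∫⁻ x in Ioc 0 y, 4 * C * (ENNReal.ofReal √x)⁻¹ :=
        (lintegral_Ioi_mul_lintegral_Ioc_comm (by fun_prop) (by fun_prop)).symm
    _ = ∫⁻ y in Ioi 0, 8 * C * g y ^ 2 := by
        refine setLIntegral_congr_fun measurableSet_Ioi fun y hy => ?_
        rw [lintegral_const_mul'' _ (by fun_prop), lintegral_Ioc_inv_sqrt hy]
        calc g y ^ 2 * (ENNReal.ofReal √y)⁻¹ * (4 * C * (2 * ENNReal.ofReal √y))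
            = 8 * C * g y ^ 2 * ((ENNReal.ofReal √y)⁻¹ * ENNReal.ofReal √y) := by ring
          _ = 8 * C * g y ^ 2 := by
            rw [ENNReal.inv_mul_cancel (by simpa using hy) ENNReal.ofReal_ne_top, mul_one]
    _ = 8 * C * ∫⁻ y in Ioi 0, g y ^ 2 := lintegral_const_mul'' _ (hg.pow_const 2)

theorem aestronglyMeasurable_restrict_Ioi_of_continuousOn_Icc {E : Type*}
    [TopologicalSpace E] [TopologicalSpace.PseudoMetrizableSpace E] {F : ℝ → E}
    (h : ∀ a b, 0 < a → ContinuousOn F (Icc a b)) :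
    AEStronglyMeasurable F μ₊ :=
  ContinuousOn.aestronglyMeasurable (fun x (hx : 0 < x) =>
    ((h _ (x + 1) (half_pos hx)).continuousAt
      (Icc_mem_nhds (half_lt_self hx) (lt_add_one x))).continuousWithinAt) measurableSet_Ioi

section

variable {φ : ℝ → ℂ} {C : ℝ≥0∞}

theorem aestronglyMeasurable_restrict_Ioi_of_memLp_isCompact
    (hφ : ∀ K : Set ℝ, IsCompact K → K ⊆ Ioi 0 → MemLp φ 2 (volume.restrict K)) :
    AEStronglyMeasurable φ μ₊ := by
  refine LocallyIntegrableOn.aestronglyMeasurable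
    ((locallyIntegrableOn_iff isOpen_Ioi.isLocallyClosed).2 fun K hK hKc => ?_)
  have : IsFiniteMeasure (volume.restrict K) := isFiniteMeasure_restrict.2 hKc.measure_lt_top.ne
  exact (hφ K hKc hK).integrable one_le_two

theorem integrableOn_Ioc_of_memLp {f : ℝ → ℂ} (hf : MemLp f 2 μ₊) (x : ℝ) :
    IntegrableOn f (Ioc 0 x) :=
  (hf.mono_measure (Measure.restrict_mono Ioc_subset_Ioi_self le_rfl)).integrable one_le_two

theorem memLp_restrict_Ioi_of_tailBounded (hφ : AEStronglyMeasurable φ μ₊)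
    (hC : TailBounded (fun y => ‖φ y‖ₑ ^ 2) C) (hC_top : C ≠ ⊤)
    {x : ℝ} (hx : 0 < x) : MemLp φ 2 (volume.restrict (Ioi x)) := by
  refine ⟨hφ.mono_set (Ioi_subset_Ioi hx.le), ?_⟩
  refine (ENNReal.pow_lt_top_iff.1 ?_).resolve_right two_ne_zero
  rw [eLpNorm_two_sq, lt_top_iff_ne_top]
  intro h_top
  have := hC x hx
  rw [h_top, ENNReal.mul_top (by simpa using hx)] at this
  exact hC_top (top_le_iff.1 this)

theorem integrableOn_Ioi_mul_of_memLp (hφ : AEStronglyMeasurable φ μ₊)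
    (hC : TailBounded (fun y => ‖φ y‖ₑ ^ 2) C) (hC_top : C ≠ ⊤)
    {f : ℝ → ℂ} (hf : MemLp f 2 μ₊) {x : ℝ} (hx : 0 < x) :
    IntegrableOn (fun y => φ y * f y) (Ioi x) :=
  (memLp_restrict_Ioi_of_tailBounded hφ hC hC_top hx).integrable_mul
    (hf.mono_measure (Measure.restrict_mono (Ioi_subset_Ioi hx.le) le_rfl))

theorem eLpNorm_mul_primitive_le (hφ : AEStronglyMeasurable φ μ₊)
    (hC : TailBounded (fun y => ‖φ y‖ₑ ^ 2) C) {f : ℝ → ℂ}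
    (hf : AEStronglyMeasurable f μ₊) :
    eLpNorm (fun x => φ x * ∫ y in Ioc 0 x, f y) 2 μ₊
      ≤ (8 * C) ^ (2⁻¹ : ℝ) * eLpNorm f 2 μ₊ := by
  refine eLpNorm_two_le_of_lintegral_sq_le ?_
  calc ∫⁻ x in Ioi 0, ‖φ x * ∫ y in Ioc 0 x, f y‖ₑ ^ 2
      ≤ ∫⁻ x in Ioi 0, ‖φ x‖ₑ ^ 2 * (∫⁻ y in Ioc 0 x, ‖f y‖ₑ) ^ 2 :=
        lintegral_mono fun x => by
          rw [enorm_mul, mul_pow]; gcongr; exact enorm_integral_le_lintegral_enorm _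
    _ ≤ 8 * C * ∫⁻ y in Ioi 0, ‖f y‖ₑ ^ 2 :=
        lintegral_mul_sq_lintegral_Ioc_le (hφ.enorm.pow_const 2) hf.enorm hC

theorem eLpNorm_integral_Ioi_mul_le (hφ : AEStronglyMeasurable φ μ₊)
    (hC : TailBounded (fun y => ‖φ y‖ₑ ^ 2) C) {f : ℝ → ℂ}
    (hf : AEStronglyMeasurable f μ₊) :
    eLpNorm (fun x => ∫ y in Ioi x, φ y * f y) 2 μ₊
      ≤ (8 * C) ^ (2⁻¹ : ℝ) * eLpNorm f 2 μ₊ := by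
  refine eLpNorm_two_le_of_lintegral_sq_le ?_
  calc ∫⁻ x in Ioi 0, ‖∫ y in Ioi x, φ y * f y‖ₑ ^ 2
      ≤ ∫⁻ x in Ioi 0, (∫⁻ y in Ioi x, ‖φ y‖ₑ * ‖f y‖ₑ) ^ 2 :=
        lintegral_mono fun x => by
          gcongr
          simpa only [enorm_mul] using enorm_integral_le_lintegral_enorm (fun y => φ y * f y)
    _ ≤ 8 * C * ∫⁻ y in Ioi 0, ‖f y‖ₑ ^ 2 :=
        lintegral_sq_lintegral_Ioi_mul_le hφ.enorm hf.enorm hC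

theorem exists_isQplus_of_tailBounded (hφ : AEStronglyMeasurable φ μ₊)
    (hC : TailBounded (fun y => ‖φ y‖ₑ ^ 2) C) (hC_top : C ≠ ⊤) :
    ∃ T, IsQplus φ T := by
  obtain ⟨T, hT⟩ := exists_continuousLinearMap_of_eLpNorm_le (𝕜 := ℂ)
    (fun f x => φ x * ∫ y in Ioc 0 x, f y) _
    (ENNReal.rpow_ne_top_of_nonneg (by norm_num) (ENNReal.mul_ne_top (by norm_num) hC_top))
    (fun f hf => hφ.mul <| aestronglyMeasurable_restrict_Ioi_of_continuousOn_Icc fun a b ha =>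
      (intervalIntegral.continuousOn_primitive ((integrableOn_Icc_iff_integrableOn_Ioc).2
        (integrableOn_Ioc_of_memLp hf b))).mono (Icc_subset_Icc_left ha.le))
    (fun f hf => eLpNorm_mul_primitive_le hφ hC hf.1)
    (fun f g _ hfg => ae_of_all _ fun x => by
      simp only [integral_congr_ae (ae_restrict_of_ae_restrict_of_subset Ioc_subset_Ioi_self hfg)])
    (fun f g hf hg => ae_of_all _ fun x => by
      simp only [Pi.add_apply]
      rw [integral_add (integrableOn_Ioc_of_memLp hf x) (integrableOn_Ioc_of_memLp hg x), mul_add])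
    (fun c f _ => ae_of_all _ fun x => by
      simp only [Pi.smul_apply, smul_eq_mul]
      rw [integral_const_mul]
      ring)
  exact ⟨T, fun f hf _ => hT f hf⟩

theorem exists_isQminus_of_tailBounded (hφ : AEStronglyMeasurable φ μ₊)
    (hC : TailBounded (fun y => ‖φ y‖ₑ ^ 2) C) (hC_top : C ≠ ⊤) :
    ∃ T, IsQminus φ T := by
  obtain ⟨T, hT⟩ := exists_continuousLinearMap_of_eLpNorm_le (𝕜 := ℂ)
    (fun f x => ∫ y in Ioi x, φ y * f y) _
    (ENNReal.rpow_ne_top_of_nonneg (by norm_num) (ENNReal.mul_ne_top (by norm_num) hC_top))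
    (fun f hf => aestronglyMeasurable_restrict_Ioi_of_continuousOn_Icc fun a b ha =>
      (IntegrableOn.continuousOn_Ici_primitive_Ioi
        (integrableOn_Ioi_mul_of_memLp hφ hC hC_top hf ha)).mono Icc_subset_Ici_self)
    (fun f hf => eLpNorm_integral_Ioi_mul_le hφ hC hf.1)
    (fun f g _ hfg => ae_restrict_of_forall_mem measurableSet_Ioi fun x hx => by
      refine integral_congr_ae ?_
      filter_upwards [ae_restrict_of_ae_restrict_of_subset (Ioi_subset_Ioi (le_of_lt hx)) hfg]
        with y hy
      rw [hy])
    (fun f g hf hg => ae_restrict_of_forall_mem measurableSet_Ioi fun x hx => by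
      simp only [Pi.add_apply, mul_add]
      exact integral_add (integrableOn_Ioi_mul_of_memLp hφ hC hC_top hf hx)
        (integrableOn_Ioi_mul_of_memLp hφ hC hC_top hg hx))
    (fun c f _ => ae_of_all _ fun x => by
      simp only [Pi.smul_apply, smul_eq_mul, mul_left_comm _ c, integral_const_mul])
  exact ⟨T, fun f hf _ => hT f hf⟩

theorem integral_Ioi_max_mul_eq {f : ℝ → ℂ} {x : ℝ} (hx : 0 ≤ x)
    (hf : IntegrableOn f (Ioc 0 x)) (hφf : IntegrableOn (fun y => φ y * f y) (Ioi x)) :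
    ∫ y in Ioi 0, φ (max x y) * f y = (φ x * ∫ y in Ioc 0 x, f y) + ∫ y in Ioi x, φ y * f y := by
  have h_left : EqOn (fun y => φ (max x y) * f y) (fun y => φ x * f y) (Ioc 0 x) :=
    fun y hy => by simp only [max_eq_left hy.2]
  have h_right : EqOn (fun y => φ (max x y) * f y) (fun y => φ y * f y) (Ioi x) :=
    fun y (hy : x < y) => by simp only [max_eq_right hy.le]
  rw [← Ioc_union_Ioi_eq_Ioi hx, setIntegral_union Ioc_disjoint_Ioi_same measurableSet_Ioi
      (IntegrableOn.congr_fun (hf.const_mul (φ x)) h_left.symm measurableSet_Ioc)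
      (hφf.congr_fun h_right.symm measurableSet_Ioi),
    setIntegral_congr_fun measurableSet_Ioc h_left, setIntegral_congr_fun measurableSet_Ioi h_right,
    integral_const_mul]

theorem exists_isQ_of_tailBounded (hφ : AEStronglyMeasurable φ μ₊)
    (hC : TailBounded (fun y => ‖φ y‖ₑ ^ 2) C) (hC_top : C ≠ ⊤) :
    ∃ T, IsQ φ (Ioi 0) T := by
  obtain ⟨T₁, hT₁⟩ := exists_isQplus_of_tailBounded hφ hC hC_top
  obtain ⟨T₂, hT₂⟩ := exists_isQminus_of_tailBounded hφ hC hC_top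
  refine ⟨T₁ + T₂, fun f hf hf_test => ?_⟩
  filter_upwards [Lp.coeFn_add (T₁ (hf.toLp f)) (T₂ (hf.toLp f)), hT₁ f hf hf_test,
    hT₂ f hf hf_test, ae_restrict_mem measurableSet_Ioi] with x h_add h₁ h₂ (hx : 0 < x)
  rw [show (T₁ + T₂) (hf.toLp f) = T₁ (hf.toLp f) + T₂ (hf.toLp f) from rfl, h_add,
    Pi.add_apply, h₁, h₂]
  exact (integral_Ioi_max_mul_eq hx.le (integrableOn_Ioc_of_memLp hf x)
    (integrableOn_Ioi_mul_of_memLp hφ hC hC_top hf hx)).symm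

theorem memLp_indicator_Ioc (a b : ℝ) :
    MemLp ((Ioc a b).indicator fun _ => (1 : ℂ)) 2 μ₊ :=
  memLp_indicator_const 2 measurableSet_Ioc 1 (Or.inr (by
    rw [Measure.restrict_apply measurableSet_Ioc]
    exact (measure_mono_top inter_subset_left).mt measure_Ioc_lt_top.ne))

theorem testFun_indicator_Ioc {a : ℝ} (ha : 0 < a) (b : ℝ) :
    TestFun ((Ioc a b).indicator fun _ => (1 : ℂ)) :=
  ⟨⟨1, fun y => by by_cases hy : y ∈ Ioc a b <;> simp [hy]⟩,
    ⟨a, b, ha, fun _ hy => indicator_of_notMem (fun h => hy (Ioc_subset_Icc_self h)) _⟩⟩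

theorem eLpNorm_indicator_Ioc_sq {a : ℝ} (ha : 0 ≤ a) (b : ℝ) :
    eLpNorm ((Ioc a b).indicator fun _ => (1 : ℂ)) 2 μ₊ ^ 2
      = ENNReal.ofReal (b - a) := by
  rw [eLpNorm_indicator_const measurableSet_Ioc two_ne_zero ENNReal.ofNat_ne_top,
    Measure.restrict_apply measurableSet_Ioc,
    inter_eq_left.2 (Ioc_subset_Ioi_self.trans (Ioi_subset_Ioi ha)),
    Real.volume_Ioc, enorm_one, one_mul, ← ENNReal.rpow_natCast, ← ENNReal.rpow_mul]
  norm_num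

theorem setIntegral_indicator_Ioc_const {s : Set ℝ} {a b : ℝ}
    (hab : a ≤ b) (hsub : Ioc a b ⊆ s) (c : ℂ) :
    ∫ y in s, (Ioc a b).indicator (fun _ => c) y = ((b - a : ℝ) : ℂ) * c := by
  rw [setIntegral_indicator measurableSet_Ioc, inter_eq_right.2 hsub, setIntegral_const,
    Real.volume_real_Ioc_of_le hab, Complex.real_smul]

theorem enorm_sq_mul_lintegral_Ioi_le
    {T : Lp ℂ 2 μ₊ →L[ℂ] Lp ℂ 2 μ₊}
    {f : ℝ → ℂ} (hf : MemLp f 2 μ₊) {c : ℂ} {x : ℝ} (hx : 0 ≤ x)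
    (hT : ∀ᵐ t ∂volume.restrict (Ioi x), T (hf.toLp f) t = c * φ t) :
    ‖c‖ₑ ^ 2 * ∫⁻ t in Ioi x, ‖φ t‖ₑ ^ 2 ≤ ‖T‖ₑ ^ 2 * eLpNorm f 2 μ₊ ^ 2 :=
  calc ‖c‖ₑ ^ 2 * ∫⁻ t in Ioi x, ‖φ t‖ₑ ^ 2 = ∫⁻ t in Ioi x, ‖T (hf.toLp f) t‖ₑ ^ 2 := by
        rw [← lintegral_const_mul' _ _ (by simp)]
        refine lintegral_congr_ae ?_
        filter_upwards [hT] with t ht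
        rw [ht, enorm_mul, mul_pow]
    _ ≤ ∫⁻ t in Ioi 0, ‖T (hf.toLp f) t‖ₑ ^ 2 := lintegral_mono_set (Ioi_subset_Ioi hx)
    _ = ‖T (hf.toLp f)‖ₑ ^ 2 := by rw [Lp.enorm_def, eLpNorm_two_sq]
    _ ≤ (‖T‖ₑ * ‖hf.toLp f‖ₑ) ^ 2 := by gcongr; exact T.le_opENorm _
    _ = ‖T‖ₑ ^ 2 * eLpNorm f 2 μ₊ ^ 2 := by rw [mul_pow, Lp.enorm_toLp]

theorem ofReal_mul_lintegral_Ioi_le_of_apply_indicator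
    {T : Lp ℂ 2 μ₊ →L[ℂ] Lp ℂ 2 μ₊}
    {x : ℝ} (hx : 0 < x)
    (hT : ∀ᵐ t ∂volume.restrict (Ioi x),
      T ((memLp_indicator_Ioc (x / 2) x).toLp _) t = ((x / 2 : ℝ) : ℂ) * φ t) :
    ENNReal.ofReal x * ∫⁻ t in Ioi x, ‖φ t‖ₑ ^ 2 ≤ 2 * ‖T‖ₑ ^ 2 := by
  set a := ENNReal.ofReal (x / 2)
  have h := enorm_sq_mul_lintegral_Ioi_le (memLp_indicator_Ioc (x / 2) x) hx.le hT
  rw [eLpNorm_indicator_Ioc_sq (half_pos hx).le, sub_half, ← ofReal_norm, Complex.norm_real,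
    Real.norm_of_nonneg (half_pos hx).le, pow_two, mul_assoc, mul_comm (‖T‖ₑ ^ 2)] at h
  have h_half : a * ∫⁻ t in Ioi x, ‖φ t‖ₑ ^ 2 ≤ ‖T‖ₑ ^ 2 :=
    (ENNReal.mul_le_mul_iff_right (by simpa [a] using hx) ENNReal.ofReal_ne_top).1 h
  calc ENNReal.ofReal x * ∫⁻ t in Ioi x, ‖φ t‖ₑ ^ 2 = 2 * (a * ∫⁻ t in Ioi x, ‖φ t‖ₑ ^ 2) := by
        rw [← mul_assoc, ← ENNReal.ofReal_ofNat 2, ← ENNReal.ofReal_mul zero_le_two,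
          mul_div_cancel₀ x two_ne_zero]
    _ ≤ 2 * ‖T‖ₑ ^ 2 := by gcongr

theorem tailBounded_of_isQplus {T : Lp ℂ 2 μ₊ →L[ℂ] Lp ℂ 2 μ₊} (hT : IsQplus φ T) :
    TailBounded (fun y => ‖φ y‖ₑ ^ 2) (2 * ‖T‖ₑ ^ 2) := fun x hx => by
  refine ofReal_mul_lintegral_Ioi_le_of_apply_indicator hx ?_
  filter_upwards [ae_restrict_of_ae_restrict_of_subset (Ioi_subset_Ioi hx.le)
      (hT _ (memLp_indicator_Ioc (x / 2) x) (testFun_indicator_Ioc (half_pos hx) x)),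
    ae_restrict_mem measurableSet_Ioi] with t ht (hxt : x < t)
  rw [ht, setIntegral_indicator_Ioc_const (half_le_self hx.le)
    (Ioc_subset_Ioc (half_pos hx).le hxt.le), sub_half, mul_one, mul_comm]

theorem tailBounded_of_isQ {T : Lp ℂ 2 μ₊ →L[ℂ] Lp ℂ 2 μ₊} (hT : IsQ φ (Ioi 0) T) :
    TailBounded (fun y => ‖φ y‖ₑ ^ 2) (2 * ‖T‖ₑ ^ 2) := fun x hx => by
  refine ofReal_mul_lintegral_Ioi_le_of_apply_indicator hx ?_
  filter_upwards [ae_restrict_of_ae_restrict_of_subset (Ioi_subset_Ioi hx.le)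
      (hT _ (memLp_indicator_Ioc (x / 2) x) (testFun_indicator_Ioc (half_pos hx) x)),
    ae_restrict_mem measurableSet_Ioi] with t ht (hxt : x < t)
  have h_ind : ∀ y, φ (max t y) * (Ioc (x / 2) x).indicator (fun _ => 1) y
      = (Ioc (x / 2) x).indicator (fun _ => φ t) y := fun y => by
    by_cases hy : y ∈ Ioc (x / 2) x
    · simp [hy, max_eq_left (hy.2.trans hxt.le)]
    · simp [hy]
  rw [ht]
  simp only [h_ind]
  rw [setIntegral_indicator_Ioc_const (half_le_self hx.le)
    (Ioc_subset_Ioi_self.trans (Ioi_subset_Ioi (half_pos hx).le)), sub_half]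

end

end QPhi

/-- Boundedness of `Q_φ`, of `Q_φ⁺`, and the condition `φ ∈ X_∞` are equivalent. -/
theorem stmt_0 (φ : ℝ → ℂ)
    (hφ : ∀ K : Set ℝ, IsCompact K → K ⊆ Set.Ioi 0 → MemLp φ 2 (volume.restrict K)) :
    ((∃ T, IsQ φ (Set.Ioi 0) T) ↔ (∃ T, IsQplus φ T)) ∧
    ((∃ T, IsQ φ (Set.Ioi 0) T) ↔
      (∃ C : ℝ≥0∞, C < ⊤ ∧ ∀ x : ℝ, 0 < x →
        ENNReal.ofReal x * ∫⁻ y in Set.Ioi x, (‖φ y‖₊ : ℝ≥0∞) ^ 2 ≤ C)) := by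
  have hφm := QPhi.aestronglyMeasurable_restrict_Ioi_of_memLp_isCompact hφ
  have bounded_of_tail : ∀ C < ⊤, QPhi.TailBounded (fun y => ‖φ y‖ₑ ^ 2) C →
      (∃ T, IsQ φ (Ioi 0) T) ∧ ∃ T, IsQplus φ T := fun C hC_lt hC =>
    ⟨QPhi.exists_isQ_of_tailBounded hφm hC hC_lt.ne,
      QPhi.exists_isQplus_of_tailBounded hφm hC hC_lt.ne⟩
  refine ⟨⟨fun ⟨T, hT⟩ => (bounded_of_tail _ ?_ (QPhi.tailBounded_of_isQ hT)).2,
      fun ⟨T, hT⟩ => (bounded_of_tail _ ?_ (QPhi.tailBounded_of_isQplus hT)).1⟩,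
    fun ⟨T, hT⟩ => ⟨_, ?_, QPhi.tailBounded_of_isQ hT⟩,
    fun ⟨C, hC_lt, hC⟩ => (bounded_of_tail C hC_lt hC).1⟩
  all_goals finiteness
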